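/- Let m be a positive integer, let q, δ, z_1, ..., z_m be commuting indeterminates, and set [n] := (1−q^n)/(1−q). Then ∑_{r=1}^{m} (−δ)^{r−1} [r−1]! ∑_{1≤c_1<⋯<c_r≤m} q^{∑_{p=1}^r (c_p − m)} ∏_{p=1}^{r} ( z_{c_p} · ∏_{c_p < i < c_{p+1}} (q^p + δ[p] z_i) ) = ∑_{i=1}^{m} z_i, where by convention c_{r+1} := m+1. -/

import Mathlib

noncomputable section

/-- the field of rational functions over ℚ in indeterminates q, δ and z_1, z_2, ... -/
abbrev K8 : Type := FractionRing (MvPolynomial (ℕ ⊕ Fin 2) ℚ)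

/-- the indeterminate q -/
def qv : K8 := algebraMap (MvPolynomial (ℕ ⊕ Fin 2) ℚ) K8 (MvPolynomial.X (Sum.inr 0))
/-- the indeterminate δ -/
def dv : K8 := algebraMap (MvPolynomial (ℕ ⊕ Fin 2) ℚ) K8 (MvPolynomial.X (Sum.inr 1))
/-- the indeterminate z_i -/
def zv (i : ℕ) : K8 := algebraMap (MvPolynomial (ℕ ⊕ Fin 2) ℚ) K8 (MvPolynomial.X (Sum.inl i))

def qint (n : ℕ) : K8 := (1 - qv ^ n) / (1 - qv)

def qfact (k : ℕ) : K8 := ∏ a ∈ Finset.range k, qint (a + 1)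

/-!
Write `S m r` for the inner sum over the `r`-chains in `[1, m]`. When the point `m + 1` is added,
an `r`-chain either avoids it, and then its last gap gains the factor `(q^r + δ[r] z_{m+1}) / q^r`,
or it ends in `m + 1`, and then it is an `(r - 1)`-chain of `[1, m]` times `z_{m+1} / q^{r-1}`.
As the coefficients `a_r = (-δ)^{r-1} [r-1]!` satisfy `a_{r+1} = -δ [r] a_r`, the `δ`-terms
coming from consecutive `r` cancel and the whole sum grows by exactly `z_{m+1}`. Only this
recurrence of the coefficients is used, so `[p]` may be replaced by arbitrary weights `w p`.
-/

open Finset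

theorem Finset.sort_insert_of_forall_lt {α : Type*} [LinearOrder α] {s : Finset α} {a : α}
    (h : ∀ b ∈ s, b < a) : (insert a s).sort (· ≤ ·) = s.sort (· ≤ ·) ++ [a] := by
  have ha : a ∉ s := fun ha => lt_irrefl a (h a ha)
  have hnodup : (s.sort (· ≤ ·) ++ [a]).Nodup :=
    List.nodup_append.2 ⟨s.sort_nodup _, List.nodup_singleton a, by simpa using ha⟩
  have hsorted : (s.sort (· ≤ ·) ++ [a]).Pairwise (· ≤ ·) :=
    List.pairwise_append.2 ⟨s.pairwise_sort _, List.pairwise_singleton _ a,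
      fun b hb c hc => by rw [List.mem_singleton.1 hc]; exact (h b ((mem_sort _).1 hb)).le⟩
  rw [← (List.toFinset_sort (· ≤ ·) hnodup).2 hsorted]
  congr 1
  ext
  simp

theorem Finset.sum_Icc_one_eq_sum_range {M : Type*} [AddCommMonoid M] (g : ℕ → M) (n : ℕ) :
    ∑ i ∈ Icc 1 n, g i = ∑ i ∈ range n, g (i + 1) := by
  rw [range_eq_Ico, sum_Ico_add' g 0 n 1, zero_add, Ico_add_one_right_eq_Icc]

theorem Finset.sum_powersetCard_succ_insert {α M : Type*} [DecidableEq α] [AddCommMonoid M]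
    {s : Finset α} {x : α} (hx : x ∉ s) (n : ℕ) (g : Finset α → M) :
    ∑ t ∈ (insert x s).powersetCard (n + 1), g t =
      ∑ t ∈ s.powersetCard (n + 1), g t + ∑ t ∈ s.powersetCard n, g (insert x t) := by
  have hx' : ∀ t ∈ s.powersetCard n, x ∉ t := fun t ht hxt =>
    hx ((mem_powersetCard.1 ht).1 hxt)
  rw [powersetCard_succ_insert hx, sum_union, sum_image]
  · intro t ht u hu htu
    rw [← erase_insert (hx' t ht), ← erase_insert (hx' u hu), htu]
  · refine disjoint_left.2 fun t ht ht' => ?_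
    obtain ⟨u, -, rfl⟩ := mem_image.1 ht'
    exact hx ((mem_powersetCard.1 ht).1 (mem_insert_self x u))

namespace QChain

variable {K : Type*} [Field K] (f : ℕ → ℕ → K) (z : ℕ → K)

/-- The product `∏_{p=1}^r (z_{c_p} ∏_{c_p < i < c_{p+1}} f p i)` for the chain
`L = [c_1, …, c_r]`, with `c_{r+1} := n`. -/
def chainProd (n r : ℕ) (L : List ℕ) : K :=
  ∏ p ∈ Icc 1 r, (z (L.getD (p - 1) 0) *
    ∏ i ∈ Ioo (L.getD (p - 1) 0) (if p = r then n else L.getD p 0), f p i)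

theorem chainProd_succ {n r : ℕ} {L : List ℕ} (hr : 1 ≤ r) (hlast : L.getD (r - 1) 0 < n) :
    chainProd f z (n + 1) r L = chainProd f z n r L * f r n := by
  obtain ⟨r, rfl⟩ : ∃ r', r = r' + 1 := ⟨r - 1, by omega⟩
  rw [Nat.add_sub_cancel] at hlast
  have hbelow : ∀ p ∈ Icc 1 r, (if p = r + 1 then n + 1 else L.getD p 0) =
      (if p = r + 1 then n else L.getD p 0) := fun p hp => by
    rw [if_neg (by grind), if_neg (by grind)]
  have htop : Ioo (L.getD r 0) (n + 1) = insert n (Ioo (L.getD r 0) n) := by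
    rw [Ioo_add_one_right_eq_Ioc, Ioo_insert_right hlast]
  simp only [chainProd, prod_Icc_succ_top (Nat.le_add_left 1 r), if_pos, Nat.add_sub_cancel,
    htop, prod_insert right_notMem_Ioo]
  rw [prod_congr rfl fun p hp => by rw [hbelow p hp]]
  ring

theorem chainProd_append {n r : ℕ} {L : List ℕ} (hL : L.length = r) :
    chainProd f z (n + 1) (r + 1) (L ++ [n]) = chainProd f z n r L * z n := by
  have hbelow : ∀ p ∈ Icc 1 r, (if p = r + 1 then n + 1 else (L ++ [n]).getD p 0) =
      (if p = r then n else L.getD p 0) := fun p hp => by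
    rw [if_neg (by grind)]
    split_ifs with hp
    · simp [hL, hp]
    · rw [List.getD_append _ _ _ _ (by grind)]
  have hcp : ∀ p ∈ Icc 1 r, (L ++ [n]).getD (p - 1) 0 = L.getD (p - 1) 0 := fun p hp =>
    List.getD_append _ _ _ _ (by grind)
  simp only [chainProd, prod_Icc_succ_top (Nat.le_add_left 1 r), if_pos, Nat.add_sub_cancel]
  rw [prod_congr rfl fun p hp => by rw [hbelow p hp, hcp p hp]]
  simp [hL, Ioo_add_one_right_eq_Ioc]

variable (q : K)

def chainWeight (m r : ℕ) (C : Finset ℕ) : K :=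
  q ^ (∑ c ∈ C, c) * (q ^ (r * m))⁻¹ * chainProd f z (m + 1) r (C.sort (· ≤ ·))

def chainSum (m r : ℕ) : K :=
  ∑ C ∈ (Icc 1 m).powersetCard r, chainWeight f z q m r C

theorem chainWeight_succ {m r : ℕ} {C : Finset ℕ} (hC : C ⊆ Icc 1 m) (hr : C.card = r)
    (hr1 : 1 ≤ r) :
    chainWeight f z q (m + 1) r C = chainWeight f z q m r C * f r (m + 1) / q ^ r := by
  have hlen : r - 1 < (C.sort (· ≤ ·)).length := by rw [length_sort]; omega
  have hlast : (C.sort (· ≤ ·)).getD (r - 1) 0 < m + 1 := by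
    rw [List.getD_eq_getElem _ _ hlen]
    exact Nat.lt_succ_of_le (mem_Icc.1 (hC ((mem_sort _).1 (List.getElem_mem hlen)))).2
  rw [chainWeight, chainWeight, chainProd_succ f z hr1 hlast, mul_add, mul_one, pow_add]
  ring

theorem chainWeight_succ_insert (hq : q ≠ 0) {m r : ℕ} {C : Finset ℕ} (hC : C ⊆ Icc 1 m)
    (hr : C.card = r) :
    chainWeight f z q (m + 1) (r + 1) (insert (m + 1) C) =
      chainWeight f z q m r C * z (m + 1) / q ^ r := by
  have hlt : ∀ c ∈ C, c < m + 1 := fun c hc => Nat.lt_succ_of_le (mem_Icc.1 (hC hc)).2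
  rw [chainWeight, chainWeight, sort_insert_of_forall_lt hlt,
    chainProd_append f z (by rw [length_sort, hr]), sum_insert fun h => (hlt _ h).false,
    show (r + 1) * (m + 1) = r * m + r + (m + 1) by ring, pow_add, pow_add, pow_add]
  field_simp
  ring

theorem chainSum_zero (m : ℕ) : chainSum f z q m 0 = 1 := by
  simp [chainSum, chainWeight, chainProd]

theorem chainSum_eq_zero_of_lt {m r : ℕ} (h : m < r) : chainSum f z q m r = 0 := by
  rw [chainSum, powersetCard_eq_empty.2 (by rwa [Nat.card_Icc, Nat.add_sub_cancel]), sum_empty]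

theorem chainSum_succ_succ (hq : q ≠ 0) (m r : ℕ) :
    chainSum f z q (m + 1) (r + 1) =
      chainSum f z q m (r + 1) * f (r + 1) (m + 1) / q ^ (r + 1) +
        chainSum f z q m r * z (m + 1) / q ^ r := by
  rw [chainSum, ← insert_Icc_right_eq_Icc_add_one (by omega),
    sum_powersetCard_succ_insert (by simp), chainSum, chainSum, sum_mul, sum_div, sum_mul, sum_div]
  congr 1 <;> refine sum_congr rfl fun C hC => ?_ <;>
    obtain ⟨hsub, hcard⟩ := mem_powersetCard.1 hC
  · exact chainWeight_succ f z q hsub hcard (Nat.le_add_left 1 r)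
  · exact chainWeight_succ_insert f z q hq hsub hcard

theorem sum_range_mul_chainSum_eq_sum (hq : q ≠ 0) (δ : K) (w : ℕ → K) (m : ℕ) :
    ∑ r ∈ range m, (-δ) ^ r * (∏ a ∈ range r, w (a + 1)) *
        chainSum (fun p i => q ^ p + δ * w p * z i) z q m (r + 1) =
      ∑ i ∈ Icc 1 m, z i := by
  set S := chainSum (fun p i => q ^ p + δ * w p * z i) z q
  set coeff : ℕ → K := fun r => (-δ) ^ r * ∏ a ∈ range r, w (a + 1)
  have hcoeff : ∀ r, coeff (r + 1) = coeff r * (-δ * w (r + 1)) := fun r => by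
    simp only [coeff, pow_succ, prod_range_succ]
    ring
  induction m with
  | zero => simp
  | succ m ih =>
    have hterm : ∀ r ∈ range m,
        coeff r * (S m (r + 1) * (q ^ (r + 1) + δ * w (r + 1) * z (m + 1)) / q ^ (r + 1)) +
          coeff (r + 1) * (S m (r + 1) * z (m + 1) / q ^ (r + 1)) = coeff r * S m (r + 1) :=
      fun r _ => by
        rw [hcoeff]
        field_simp
        ring
    calc ∑ r ∈ range (m + 1), coeff r * S (m + 1) (r + 1)
        = ∑ r ∈ range (m + 1),
              coeff r * (S m (r + 1) * (q ^ (r + 1) + δ * w (r + 1) * z (m + 1)) / q ^ (r + 1)) +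
            ∑ r ∈ range (m + 1), coeff r * (S m r * z (m + 1) / q ^ r) := by
          simp only [S, chainSum_succ_succ _ _ _ hq, mul_add, sum_add_distrib]
      _ = ∑ r ∈ range m, coeff r * S m (r + 1) + z (m + 1) := by
          have hvanish : S m (m + 1) = 0 := chainSum_eq_zero_of_lt _ _ _ (lt_add_one m)
          have hempty : coeff 0 * S m 0 = 1 := by simp [coeff, S, chainSum_zero]
          rw [sum_range_succ, sum_range_succ', hvanish, ← sum_congr rfl hterm, sum_add_distrib]
          linear_combination z (m + 1) * hempty
      _ = ∑ i ∈ Icc 1 (m + 1), z i := by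
          rw [ih, sum_Icc_succ_top (Nat.le_add_left 1 m)]

theorem sum_Icc_mul_chainSum_eq_sum (hq : q ≠ 0) (δ : K) (w : ℕ → K) (m : ℕ) :
    ∑ r ∈ Icc 1 m, (-δ) ^ (r - 1) * (∏ a ∈ range (r - 1), w (a + 1)) *
        chainSum (fun p i => q ^ p + δ * w p * z i) z q m r =
      ∑ i ∈ Icc 1 m, z i := by
  rw [sum_Icc_one_eq_sum_range]
  simpa only [Nat.add_sub_cancel] using sum_range_mul_chainSum_eq_sum z q hq δ w m

end QChain

theorem qv_ne_zero : qv ≠ 0 :=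
  (map_ne_zero_iff _ (IsFractionRing.injective _ _)).2 (MvPolynomial.X_ne_zero _)

theorem stmt8_general (m : ℕ) :
    ∑ r ∈ Finset.Icc 1 m,
      (-dv) ^ (r - 1) * qfact (r - 1) *
        ∑ C ∈ (Finset.Icc 1 m).powersetCard r,
          (qv ^ (∑ c ∈ C, c) * (qv ^ (r * m))⁻¹ *
            ∏ p ∈ Finset.Icc 1 r,
              (zv ((C.sort (· ≤ ·)).getD (p - 1) 0) *
                ∏ i ∈ Finset.Ioo ((C.sort (· ≤ ·)).getD (p - 1) 0)
                    (if p = r then m + 1 else (C.sort (· ≤ ·)).getD p 0),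
                  (qv ^ p + dv * qint p * zv i))) =
    ∑ i ∈ Finset.Icc 1 m, zv i :=
  QChain.sum_Icc_mul_chainSum_eq_sum zv qv qv_ne_zero dv qint m

/-- ∑_{r=1}^{m} (−δ)^{r−1}[r−1]! ∑_{1≤c_1<⋯<c_r≤m} q^{∑_p (c_p−m)}
  ∏_{p=1}^{r} ( z_{c_p} ∏_{c_p<i<c_{p+1}} (q^p + δ[p] z_i) ) = ∑_{i=1}^m z_i,
with the convention c_{r+1} := m+1. -/
theorem stmt8 (m : ℕ) (hm : 0 < m) :
    ∑ r ∈ Finset.Icc 1 m,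
      (-dv) ^ (r - 1) * qfact (r - 1) *
        ∑ C ∈ (Finset.Icc 1 m).powersetCard r,
          (qv ^ (∑ c ∈ C, c) * (qv ^ (r * m))⁻¹ *
            ∏ p ∈ Finset.Icc 1 r,
              (zv ((C.sort (· ≤ ·)).getD (p - 1) 0) *
                ∏ i ∈ Finset.Ioo ((C.sort (· ≤ ·)).getD (p - 1) 0)
                    (if p = r then m + 1 else (C.sort (· ≤ ·)).getD p 0),
                  (qv ^ p + dv * qint p * zv i))) =
    ∑ i ∈ Finset.Icc 1 m, zv i :=
  stmt8_general m

end
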